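/- arXiv:2206.04436 — 8 statements merged into one kernel-verified Lean document; each statement's English description precedes it below -/
import Mathlib

section
/- Exact transition-disturbance performance difference: for any policy π in a finite MDP M = (S,A,P,R,γ) and perturbed MDP M̂ = (S,A,P̂,R,γ) with the same initial distribution, where P̂(s'|s,a) > 0 whenever relevant, J_{M̂}(π) - J_M(π) = (γ/(1-γ)) · E_{s∼d^π_{M̂}} E_{a∼π(·|s)} E_{s'∼P̂(·|s,a)} [(1 - P(s'|s,a)/P̂(s'|s,a)) · V_{M,π}(s')]. -/
open Finset

def IsPmf {X : Type*} [Fintype X] (p : X → ℝ) : Prop :=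
  (∀ x, 0 ≤ p x) ∧ ∑ x, p x = 1

/-- Marginal distribution of the state at time `t` of the Markov chain induced by
the policy `π`, the transition kernel `P` and the initial distribution `μ`. -/
noncomputable def stateDist {S A : Type*} [Fintype S] [Fintype A]
    (P : S → A → S → ℝ) (π : S → A → ℝ) (μ : S → ℝ) : ℕ → S → ℝ
  | 0 => μ
  | (t + 1) => fun s => ∑ s', ∑ a, stateDist P π μ t s' * π s' a * P s' a s

/-- Discounted state visitation distribution
`d(s) = (1-γ) Σ_{t≥0} γ^t P(s_t = s | π, P, s₀ ∼ μ)`. -/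
noncomputable def visit {S A : Type*} [Fintype S] [Fintype A] (γ : ℝ)
    (P : S → A → S → ℝ) (π : S → A → ℝ) (μ : S → ℝ) (s : S) : ℝ :=
  (1 - γ) * ∑' t : ℕ, γ ^ t * stateDist P π μ t s

/-- exact transition-disturbance performance difference:
`J_{M̂}(π) - J_M(π) = (γ/(1-γ)) E_{s∼d^π_{M̂}} E_{a∼π(·|s)} E_{s'∼P̂(·|s,a)}
[(1 - P(s'|s,a)/P̂(s'|s,a)) V_{M,π}(s')]`, where `V` and `V̂` are the value
functions of `π` in the MDPs with kernels `P` and `P̂` (Bellman evaluation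
equations), `J = Σ_s μ(s) V(s)`, and `P̂` is strictly positive. -/
theorem transition_disturbance_exact {S A : Type*} [Fintype S] [Fintype A]
    (γ : ℝ) (hγ0 : 0 ≤ γ) (hγ1 : γ < 1)
    (P Phat : S → A → S → ℝ) (hP : ∀ s a, IsPmf (P s a)) (hPhat : ∀ s a, IsPmf (Phat s a))
    (hpos : ∀ s a s', 0 < Phat s a s')
    (π : S → A → ℝ) (hπ : ∀ s, IsPmf (π s))
    (μ : S → ℝ) (hμ : IsPmf μ)
    (R : S → A → ℝ) (V Vhat : S → ℝ)
    (hV : ∀ s, V s = ∑ a, π s a * (R s a + γ * ∑ s', P s a s' * V s'))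
    (hVhat : ∀ s, Vhat s = ∑ a, π s a * (R s a + γ * ∑ s', Phat s a s' * Vhat s')) :
    (∑ s, μ s * Vhat s) - (∑ s, μ s * V s) =
      γ / (1 - γ) * ∑ s, visit γ Phat π μ s * ∑ a, π s a *
        ∑ s', Phat s a s' * ((1 - P s a s' / Phat s a s') * V s') := by
  have h1γ : (1:ℝ) - γ ≠ 0 := by linarith
  set d : ℕ → S → ℝ := stateDist Phat π μ with hd_def
  set g : S → ℝ := fun s => ∑ a, π s a * ∑ s', (Phat s a s' - P s a s') * V s' with hg_def
  -- the state distributions are pmfs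
  have hd : ∀ t, IsPmf (d t) := by
    intro t
    induction t with
    | zero => exact hμ
    | succ t ih =>
      refine ⟨fun s => ?_, ?_⟩
      · exact Finset.sum_nonneg fun s' _ => Finset.sum_nonneg fun a _ =>
          mul_nonneg (mul_nonneg (ih.1 s') ((hπ s').1 a)) ((hPhat s' a).1 s)
      · show ∑ s, ∑ s', ∑ a, d t s' * π s' a * Phat s' a s = 1
        rw [Finset.sum_comm]
        have : ∀ s', ∑ s, ∑ a, d t s' * π s' a * Phat s' a s = d t s' := by
          intro s'
          rw [Finset.sum_comm]
          calc ∑ a, ∑ s, d t s' * π s' a * Phat s' a s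
              = ∑ a, d t s' * π s' a * ∑ s, Phat s' a s := by
                simp [Finset.mul_sum]
            _ = ∑ a, d t s' * π s' a := by
                simp [(hPhat s' _).2]
            _ = d t s' := by rw [← Finset.mul_sum, (hπ s').2, mul_one]
        simp only [this]
        exact ih.2
  -- Bellman difference equation
  have hB : ∀ s, Vhat s - V s =
      γ * g s + γ * ∑ a, π s a * ∑ s', Phat s a s' * (Vhat s' - V s') := by
    intro s
    have key : ∀ a, π s a * (R s a + γ * ∑ s', Phat s a s' * Vhat s')
        - π s a * (R s a + γ * ∑ s', P s a s' * V s')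
        = γ * (π s a * ∑ s', (Phat s a s' - P s a s') * V s')
          + γ * (π s a * ∑ s', Phat s a s' * (Vhat s' - V s')) := by
      intro a
      have e1 : ∑ s', (Phat s a s' - P s a s') * V s'
          = (∑ s', Phat s a s' * V s') - ∑ s', P s a s' * V s' := by
        simp [sub_mul, Finset.sum_sub_distrib]
      have e2 : ∑ s', Phat s a s' * (Vhat s' - V s')
          = (∑ s', Phat s a s' * Vhat s') - ∑ s', Phat s a s' * V s' := by
        simp [mul_sub, Finset.sum_sub_distrib]
      rw [e1, e2]; ring
    conv_lhs => rw [hVhat s, hV s]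
    rw [← Finset.sum_sub_distrib]
    calc ∑ a, (π s a * (R s a + γ * ∑ s', Phat s a s' * Vhat s')
          - π s a * (R s a + γ * ∑ s', P s a s' * V s'))
        = ∑ a, (γ * (π s a * ∑ s', (Phat s a s' - P s a s') * V s')
          + γ * (π s a * ∑ s', Phat s a s' * (Vhat s' - V s'))) :=
          Finset.sum_congr rfl fun a _ => key a
      _ = γ * g s + γ * ∑ a, π s a * ∑ s', Phat s a s' * (Vhat s' - V s') := by
          rw [Finset.sum_add_distrib, ← Finset.mul_sum, ← Finset.mul_sum]
  -- key swap identity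
  have hswap : ∀ (t : ℕ) (f : S → ℝ),
      ∑ s, d t s * ∑ a, π s a * ∑ s', Phat s a s' * f s' = ∑ s', d (t+1) s' * f s' := by
    intro t f
    have hd1 : ∀ s', d (t+1) s' = ∑ s, ∑ a, d t s * π s a * Phat s a s' := by
      intro s'; rfl
    have hR : ∑ s', d (t+1) s' * f s'
        = ∑ s, ∑ a, ∑ s', d t s * π s a * Phat s a s' * f s' := by
      simp only [hd1, Finset.sum_mul]
      rw [Finset.sum_comm]
      exact Finset.sum_congr rfl fun s _ => by rw [Finset.sum_comm]
    have hL : ∑ s, d t s * ∑ a, π s a * ∑ s', Phat s a s' * f s'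
        = ∑ s, ∑ a, ∑ s', d t s * π s a * Phat s a s' * f s' := by
      simp only [Finset.mul_sum]
      exact Finset.sum_congr rfl fun s _ => Finset.sum_congr rfl fun a _ =>
        Finset.sum_congr rfl fun s' _ => by ring
    rw [hL, hR]
  set c : ℕ → ℝ := fun t => ∑ s, d t s * (Vhat s - V s) with hc_def
  set b : ℕ → ℝ := fun t => ∑ s, d t s * g s with hb_def
  have hstep : ∀ t, c t = γ * b t + γ * c (t+1) := by
    intro t
    calc c t = ∑ s, d t s *
        (γ * g s + γ * ∑ a, π s a * ∑ s', Phat s a s' * (Vhat s' - V s')) := by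
          exact Finset.sum_congr rfl fun s _ => by rw [← hB s]
      _ = γ * b t + γ * ∑ s, d t s * ∑ a, π s a * ∑ s', Phat s a s' * (Vhat s' - V s') := by
          simp only [mul_add, Finset.sum_add_distrib]
          congr 1 <;> (rw [Finset.mul_sum]; exact Finset.sum_congr rfl fun s _ => by ring)
      _ = γ * b t + γ * c (t+1) := by rw [hswap t (fun s' => Vhat s' - V s')]
  have htel : ∀ N, c 0 = ∑ t ∈ Finset.range N, γ^(t+1) * b t + γ^N * c N := by
    intro N
    induction N with
    | zero => simp
    | succ N ih =>
      rw [ih, Finset.sum_range_succ, hstep N]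
      ring
  have hdle : ∀ t s, d t s ≤ 1 := by
    intro t s
    calc d t s ≤ ∑ s', d t s' :=
          Finset.single_le_sum (fun s' _ => (hd t).1 s') (Finset.mem_univ s)
      _ = 1 := (hd t).2
  have hbound : ∀ (f : S → ℝ) (t : ℕ), |∑ s, d t s * f s| ≤ ∑ s, |f s| := by
    intro f t
    calc |∑ s, d t s * f s| ≤ ∑ s, |d t s * f s| := Finset.abs_sum_le_sum_abs _ _
      _ ≤ ∑ s, |f s| := Finset.sum_le_sum fun s _ => by
          rw [abs_mul, abs_of_nonneg ((hd t).1 s)]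
          exact mul_le_of_le_one_left (abs_nonneg _) (hdle t s)
  have hpow : Filter.Tendsto (fun N => γ^N) Filter.atTop (nhds 0) :=
    tendsto_pow_atTop_nhds_zero_of_lt_one hγ0 hγ1
  have hgeo : Filter.Tendsto (fun N => γ^N * c N) Filter.atTop (nhds 0) := by
    have h0 : Filter.Tendsto (fun N => γ^N * (∑ s, |Vhat s - V s|)) Filter.atTop (nhds 0) := by
      simpa using hpow.mul_const (∑ s, |Vhat s - V s|)
    refine squeeze_zero_norm (fun N => ?_) h0
    rw [Real.norm_eq_abs, abs_mul, abs_of_nonneg (pow_nonneg hγ0 N)]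
    exact mul_le_mul_of_nonneg_left (hbound _ N) (pow_nonneg hγ0 N)
  have hsum : Summable (fun t => γ^(t+1) * b t) := by
    refine Summable.of_norm_bounded (g := fun t => (γ * ∑ s, |g s|) * γ^t)
      ((summable_geometric_of_lt_one hγ0 hγ1).mul_left _) fun t => ?_
    rw [Real.norm_eq_abs, abs_mul, abs_of_nonneg (pow_nonneg hγ0 (t+1)), pow_succ']
    calc γ * γ^t * |b t| ≤ γ * γ^t * ∑ s, |g s| :=
          mul_le_mul_of_nonneg_left (hbound _ t) (mul_nonneg hγ0 (pow_nonneg hγ0 t))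
      _ = (γ * ∑ s, |g s|) * γ^t := by ring
  have hc0 : (∑' t, γ^(t+1) * b t) = c 0 := by
    have htend : Filter.Tendsto (fun N => ∑ t ∈ Finset.range N, γ^(t+1) * b t)
        Filter.atTop (nhds (c 0)) := by
      have : (fun N => ∑ t ∈ Finset.range N, γ^(t+1) * b t)
          = fun N => c 0 - γ^N * c N := by
        funext N; rw [htel N]; ring
      rw [this]
      simpa using (tendsto_const_nhds (x := c 0)).sub hgeo
    exact tendsto_nhds_unique hsum.hasSum.tendsto_sum_nat htend
  have hLHS : (∑ s, μ s * Vhat s) - (∑ s, μ s * V s) = c 0 := by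
    rw [← Finset.sum_sub_distrib]
    exact Finset.sum_congr rfl fun s _ => (mul_sub _ _ _).symm
  -- summability of per-state series
  have hsumd : ∀ s, Summable (fun t => γ^t * d t s) := by
    intro s
    refine Summable.of_norm_bounded (g := fun t => γ^t)
      (summable_geometric_of_lt_one hγ0 hγ1) fun t => ?_
    rw [Real.norm_eq_abs, abs_mul, abs_of_nonneg (pow_nonneg hγ0 t),
      abs_of_nonneg ((hd t).1 s)]
    exact mul_le_of_le_one_right (pow_nonneg hγ0 t) (hdle t s)
  -- rewrite RHS inner expression
  have hinner : ∀ s, (∑ a, π s a *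
      ∑ s', Phat s a s' * ((1 - P s a s' / Phat s a s') * V s')) = g s := by
    intro s
    refine Finset.sum_congr rfl fun a _ => ?_
    congr 1
    refine Finset.sum_congr rfl fun s' _ => ?_
    have h := (hpos s a s').ne'
    field_simp
  have hRHS : ∑ s, visit γ Phat π μ s * ∑ a, π s a *
      ∑ s', Phat s a s' * ((1 - P s a s' / Phat s a s') * V s')
      = (1 - γ) * ∑' t, γ^t * b t := by
    calc ∑ s, visit γ Phat π μ s * ∑ a, π s a *
          ∑ s', Phat s a s' * ((1 - P s a s' / Phat s a s') * V s')
        = ∑ s, ((1 - γ) * ∑' t, γ^t * d t s) * g s := by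
          refine Finset.sum_congr rfl fun s _ => ?_
          rw [hinner s]; rfl
      _ = (1 - γ) * ∑ s, ∑' t, γ^t * d t s * g s := by
          rw [Finset.mul_sum]
          refine Finset.sum_congr rfl fun s _ => ?_
          rw [mul_assoc, ← tsum_mul_right]
      _ = (1 - γ) * ∑' t, ∑ s, γ^t * d t s * g s := by
          rw [← Summable.tsum_finsetSum (fun s _ => (hsumd s).mul_right (g s))]
      _ = (1 - γ) * ∑' t, γ^t * b t := by
          congr 1
          refine tsum_congr fun t => ?_
          rw [hb_def, Finset.mul_sum]
          exact Finset.sum_congr rfl fun s _ => by ring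
  rw [hLHS, ← hc0, hRHS]
  have h2 : γ / (1 - γ) * ((1 - γ) * ∑' t, γ^t * b t) = γ * ∑' t, γ^t * b t := by
    field_simp
  rw [h2, ← tsum_mul_left]
  exact tsum_congr fun t => by ring
end

section
/- Transition-disturbance robustness bound via VFR: for any policy π in a finite MDP M = (S,A,P,R,γ) and perturbed MDP M̂ = (S,A,P̂,R,γ) with the same initial distribution, |J_M(π) - J_{M̂}(π)| ≤ (2γ/(1-γ)) · max_{s,a} D_TV(P(·|s,a), P̂(·|s,a)) · V̂_{M,π}, where V̂_{M,π} = max_s V_{M,π}(s) - min_s V_{M,π}(s) is the Value Function Range and D_TV(p,q) = (1/2) Σ_{s'} |p(s') - q(s')| is the total variation distance. -/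
open Finset

/-- transition-disturbance robustness bound via VFR:
`|J_M(π) - J_{M̂}(π)| ≤ (2γ/(1-γ)) · max_{s,a} D_TV(P(·|s,a), P̂(·|s,a)) · V̂_{M,π}`,
where `V̂_{M,π} = max_s V(s) - min_s V(s)` is the Value Function Range of the
value function `V` of `π` in the unperturbed MDP, `V̂hat` is the value function
in the perturbed MDP, `J = Σ_s μ(s) V(s)`, and
`D_TV(p,q) = (1/2) Σ_{s'} |p(s') - q(s')|`. -/
theorem transition_disturbance_bound {S A : Type*} [Fintype S] [Fintype A]
    [Nonempty S] [Nonempty A]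
    (γ : ℝ) (hγ0 : 0 ≤ γ) (hγ1 : γ < 1)
    (P Phat : S → A → S → ℝ) (hP : ∀ s a, IsPmf (P s a)) (hPhat : ∀ s a, IsPmf (Phat s a))
    (π : S → A → ℝ) (hπ : ∀ s, IsPmf (π s))
    (μ : S → ℝ) (hμ : IsPmf μ)
    (R : S → A → ℝ) (V Vhat : S → ℝ)
    (hV : ∀ s, V s = ∑ a, π s a * (R s a + γ * ∑ s', P s a s' * V s'))
    (hVhat : ∀ s, Vhat s = ∑ a, π s a * (R s a + γ * ∑ s', Phat s a s' * Vhat s')) :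
    |(∑ s, μ s * V s) - (∑ s, μ s * Vhat s)| ≤
      2 * γ / (1 - γ) *
        (univ.sup' univ_nonempty
          (fun sa : S × A => (1 / 2) * ∑ s', |P sa.1 sa.2 s' - Phat sa.1 sa.2 s'|)) *
        (univ.sup' univ_nonempty V - univ.inf' univ_nonempty V) := by
  classical
  set Mv := univ.sup' univ_nonempty V with hMdef
  set mv := univ.inf' univ_nonempty V with hmdef
  set D := univ.sup' univ_nonempty
      (fun sa : S × A => (1 / 2) * ∑ s', |P sa.1 sa.2 s' - Phat sa.1 sa.2 s'|) with hDdef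
  have hmle : ∀ s : S, mv ≤ V s := fun s => inf'_le _ (mem_univ s)
  have hleM : ∀ s : S, V s ≤ Mv := fun s => le_sup' _ (mem_univ s)
  have hMm : 0 ≤ Mv - mv := by
    have s := Classical.arbitrary S
    linarith [hmle s, hleM s]
  set K := univ.sup' univ_nonempty (fun s => |V s - Vhat s|) with hKdef
  have habsK : ∀ s, |V s - Vhat s| ≤ K := fun s => le_sup' (fun s => |V s - Vhat s|) (mem_univ s)
  -- key lemma
  have key : ∀ s a, |(∑ s', P s a s' * V s') - ∑ s', Phat s a s' * Vhat s'| ≤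
      (∑ s', |P s a s' - Phat s a s'|) * (Mv - mv) + K := by
    intro s a
    have hsplit : (∑ s', P s a s' * V s') - ∑ s', Phat s a s' * Vhat s'
        = (∑ s', (P s a s' - Phat s a s') * (V s' - mv))
          + ∑ s', Phat s a s' * (V s' - Vhat s') := by
      have expand : ∀ s', (P s a s' - Phat s a s') * (V s' - mv)
            + Phat s a s' * (V s' - Vhat s')
          = (P s a s' * V s' - Phat s a s' * Vhat s') - mv * (P s a s' - Phat s a s') :=
        fun s' => by ring
      have h1 : (∑ s', (P s a s' - Phat s a s') * (V s' - mv))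
            + ∑ s', Phat s a s' * (V s' - Vhat s')
          = (∑ s', P s a s' * V s') - (∑ s', Phat s a s' * Vhat s')
            - mv * ((∑ s', P s a s') - ∑ s', Phat s a s') := by
        rw [← Finset.sum_add_distrib, Finset.sum_congr rfl fun s' _ => expand s']
        simp only [Finset.sum_sub_distrib, ← Finset.mul_sum]
      rw [h1, (hP s a).2, (hPhat s a).2]
      ring
    have b1 : |∑ s', (P s a s' - Phat s a s') * (V s' - mv)| ≤
        (∑ s', |P s a s' - Phat s a s'|) * (Mv - mv) := by
      calc |∑ s', (P s a s' - Phat s a s') * (V s' - mv)|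
          ≤ ∑ s', |(P s a s' - Phat s a s') * (V s' - mv)| :=
            Finset.abs_sum_le_sum_abs _ _
        _ ≤ ∑ s', |P s a s' - Phat s a s'| * (Mv - mv) := by
            refine Finset.sum_le_sum fun s' _ => ?_
            rw [abs_mul]
            refine mul_le_mul_of_nonneg_left ?_ (abs_nonneg _)
            rw [abs_of_nonneg (by linarith [hmle s'])]
            linarith [hleM s']
        _ = (∑ s', |P s a s' - Phat s a s'|) * (Mv - mv) := by
            rw [Finset.sum_mul]
    have b2 : |∑ s', Phat s a s' * (V s' - Vhat s')| ≤ K := by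
      calc |∑ s', Phat s a s' * (V s' - Vhat s')|
          ≤ ∑ s', |Phat s a s' * (V s' - Vhat s')| := Finset.abs_sum_le_sum_abs _ _
        _ ≤ ∑ s', Phat s a s' * K := by
            refine Finset.sum_le_sum fun s' _ => ?_
            rw [abs_mul, abs_of_nonneg ((hPhat s a).1 s')]
            exact mul_le_mul_of_nonneg_left (habsK s') ((hPhat s a).1 s')
        _ = K := by rw [← Finset.sum_mul, (hPhat s a).2, one_mul]
    calc |(∑ s', P s a s' * V s') - ∑ s', Phat s a s' * Vhat s'|
        = |(∑ s', (P s a s' - Phat s a s') * (V s' - mv))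
            + ∑ s', Phat s a s' * (V s' - Vhat s')| := by rw [hsplit]
      _ ≤ _ + _ := abs_add_le _ _
      _ ≤ _ := add_le_add b1 b2
  have hDnn : 0 ≤ D := by
    obtain ⟨sa⟩ : Nonempty (S × A) := inferInstance
    refine le_trans ?_ (le_sup' _ (mem_univ sa))
    positivity
  have hTVle : ∀ s a, (∑ s', |P s a s' - Phat s a s'|) ≤ 2 * D := by
    intro s a
    have := le_sup' (fun sa : S × A => (1 / 2) * ∑ s', |P sa.1 sa.2 s' - Phat sa.1 sa.2 s'|)
      (mem_univ (s, a))
    rw [← hDdef] at this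
    simp only at this
    linarith
  -- bound at the maximizer
  obtain ⟨s0, _, hs0⟩ := exists_mem_eq_sup' (univ_nonempty (α := S)) (fun s => |V s - Vhat s|)
  have hdiff : V s0 - Vhat s0 = ∑ a, π s0 a *
      (γ * ((∑ s', P s0 a s' * V s') - ∑ s', Phat s0 a s' * Vhat s')) := by
    rw [hV s0, hVhat s0, ← Finset.sum_sub_distrib]
    exact Finset.sum_congr rfl fun a _ => by ring
  have hKle : K ≤ γ * (2 * D * (Mv - mv) + K) := by
    have hKnn : 0 ≤ K := le_trans (abs_nonneg _) (habsK (Classical.arbitrary S))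
    have hb : ∀ a, |π s0 a * (γ * ((∑ s', P s0 a s' * V s') - ∑ s', Phat s0 a s' * Vhat s'))|
        ≤ π s0 a * (γ * (2 * D * (Mv - mv) + K)) := by
      intro a
      rw [abs_mul, abs_mul, abs_of_nonneg ((hπ s0).1 a), abs_of_nonneg hγ0]
      refine mul_le_mul_of_nonneg_left (mul_le_mul_of_nonneg_left ?_ hγ0) ((hπ s0).1 a)
      refine le_trans (key s0 a) ?_
      have := mul_le_mul_of_nonneg_right (hTVle s0 a) hMm
      linarith
    calc K = |V s0 - Vhat s0| := hs0
      _ = |∑ a, π s0 a * (γ * ((∑ s', P s0 a s' * V s') - ∑ s', Phat s0 a s' * Vhat s'))| := by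
          rw [hdiff]
      _ ≤ ∑ a, |π s0 a * (γ * ((∑ s', P s0 a s' * V s') - ∑ s', Phat s0 a s' * Vhat s'))| :=
          Finset.abs_sum_le_sum_abs _ _
      _ ≤ ∑ a, π s0 a * (γ * (2 * D * (Mv - mv) + K)) := Finset.sum_le_sum fun a _ => hb a
      _ = γ * (2 * D * (Mv - mv) + K) := by rw [← Finset.sum_mul, (hπ s0).2, one_mul]
  have h1γ : (0:ℝ) < 1 - γ := by linarith
  have hKfin : K ≤ 2 * γ / (1 - γ) * D * (Mv - mv) := by
    rw [div_mul_eq_mul_div, div_mul_eq_mul_div, le_div_iff₀ h1γ]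
    nlinarith [hKle]
  calc |(∑ s, μ s * V s) - (∑ s, μ s * Vhat s)|
      = |∑ s, μ s * (V s - Vhat s)| := by
        rw [← Finset.sum_sub_distrib]
        exact congrArg abs (Finset.sum_congr rfl fun s _ => by ring)
    _ ≤ ∑ s, |μ s * (V s - Vhat s)| := Finset.abs_sum_le_sum_abs _ _
    _ ≤ ∑ s, μ s * K := by
        refine Finset.sum_le_sum fun s _ => ?_
        rw [abs_mul, abs_of_nonneg (hμ.1 s)]
        exact mul_le_mul_of_nonneg_left (habsK s) (hμ.1 s)
    _ = K := by rw [← Finset.sum_mul, hμ.2, one_mul]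
    _ ≤ _ := hKfin
end

section
/- Exact observation-disturbance performance difference: let ν : S → S be an adversary and π̂_ν the policy defined by π̂_ν(·|s) = π(·|ν(s)), with π(a|ν(s)) > 0 whenever relevant. Then J_M(π̂_ν) - J_M(π) = (γ/(1-γ)) E_{s∼d^{π̂_ν}_M} E_{a∼π(·|ν(s))} [(1 - π(a|s)/π(a|ν(s))) · E_{s'∼P(·|s,a)} V_{M,π}(s')] + (1/(1-γ)) E_{s∼d^{π̂_ν}_M} E_{a∼π(·|ν(s))} [(1 - π(a|s)/π(a|ν(s))) · R(s,a)]. -/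
open Finset

section Aux

variable {S A : Type*} [Fintype S] [Fintype A]

lemma stateDist_pmf (P : S → A → S → ℝ) (hP : ∀ s a, IsPmf (P s a))
    (π : S → A → ℝ) (hπ : ∀ s, IsPmf (π s)) (μ : S → ℝ) (hμ : IsPmf μ) (t : ℕ) :
    IsPmf (stateDist P π μ t) := by
  induction t with
  | zero => exact hμ
  | succ t ih =>
    constructor
    · intro s
      apply Finset.sum_nonneg; intro s' _
      apply Finset.sum_nonneg; intro a _
      exact mul_nonneg (mul_nonneg (ih.1 s') ((hπ s').1 a)) ((hP s' a).1 s)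
    · show ∑ s, ∑ s', ∑ a, stateDist P π μ t s' * π s' a * P s' a s = 1
      rw [Finset.sum_comm]
      have : ∀ s', ∑ s, ∑ a, stateDist P π μ t s' * π s' a * P s' a s
          = stateDist P π μ t s' := by
        intro s'
        rw [Finset.sum_comm]
        have : ∀ a, ∑ s, stateDist P π μ t s' * π s' a * P s' a s
            = stateDist P π μ t s' * π s' a := by
          intro a
          rw [← Finset.mul_sum, (hP s' a).2, mul_one]
        rw [Finset.sum_congr rfl fun a _ => this a, ← Finset.mul_sum, (hπ s').2, mul_one]
      rw [Finset.sum_congr rfl fun s' _ => this s', ih.2]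

lemma sum_mul_bound (d g : S → ℝ) (hd0 : ∀ s, 0 ≤ d s) (hd1 : ∑ s, d s = 1) :
    |∑ s, d s * g s| ≤ ∑ s, |g s| := by
  calc |∑ s, d s * g s| ≤ ∑ s, |d s * g s| := Finset.abs_sum_le_sum_abs _ _
    _ ≤ ∑ s, |g s| := by
      apply Finset.sum_le_sum; intro s _
      rw [abs_mul, abs_of_nonneg (hd0 s)]
      have hle : d s ≤ 1 := by
        rw [← hd1]; exact Finset.single_le_sum (fun i _ => hd0 i) (Finset.mem_univ s)
      nlinarith [abs_nonneg (g s)]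

lemma expected_telescope (γ : ℝ) (hγ0 : 0 ≤ γ) (hγ1 : γ < 1)
    (P : S → A → S → ℝ) (hP : ∀ s a, IsPmf (P s a))
    (π : S → A → ℝ) (hπ : ∀ s, IsPmf (π s))
    (μ : S → ℝ) (hμ : IsPmf μ) (W δ : S → ℝ)
    (h : ∀ s, W s = δ s + γ * ∑ a, π s a * ∑ s', P s a s' * W s') :
    HasSum (fun t => γ ^ t * ∑ s, stateDist P π μ t s * δ s) (∑ s, μ s * W s) := by
  set d := stateDist P π μ with hd
  set f : ℕ → ℝ := fun t => γ ^ t * ∑ s, d t s * W s with hf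
  set g : ℕ → ℝ := fun t => γ ^ t * ∑ s, d t s * δ s with hg
  have hdpmf := stateDist_pmf P hP π hπ μ hμ
  -- key step: f t = g t + f (t+1)
  have swap : ∀ t, ∑ s, (∑ s', ∑ a, d t s' * π s' a * P s' a s) * W s
      = ∑ s, d t s * ∑ a, π s a * ∑ s', P s a s' * W s' := by
    intro t
    simp only [Finset.sum_mul, Finset.mul_sum]
    rw [Finset.sum_comm]
    apply Finset.sum_congr rfl; intro x _
    rw [Finset.sum_comm]
    apply Finset.sum_congr rfl; intro a _
    apply Finset.sum_congr rfl; intro s' _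
    ring
  have step : ∀ t, f t = g t + f (t + 1) := by
    intro t
    have h1 : f (t + 1) = γ ^ (t + 1) * ∑ s, (∑ s', ∑ a, d t s' * π s' a * P s' a s) * W s := rfl
    rw [h1, swap t]
    simp only [hf, hg]
    have : ∀ s, d t s * W s = d t s * δ s + γ * (d t s * ∑ a, π s a * ∑ s', P s a s' * W s') := by
      intro s
      rw [h s]; ring
    rw [Finset.sum_congr rfl fun s _ => this s, Finset.sum_add_distrib, ← Finset.mul_sum]
    ring
  have partial_sum : ∀ n, ∑ i ∈ Finset.range n, g i = f 0 - f n := by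
    intro n
    induction n with
    | zero => simp
    | succ n ih =>
      rw [Finset.sum_range_succ, ih]
      have := step n
      linarith
  -- f n → 0
  have hfb : ∀ n, |f n| ≤ γ ^ n * ∑ s, |W s| := by
    intro n
    rw [hf]
    simp only
    rw [abs_mul, abs_of_nonneg (pow_nonneg hγ0 n)]
    exact mul_le_mul_of_nonneg_left
      (sum_mul_bound _ _ (hdpmf n).1 (hdpmf n).2) (pow_nonneg hγ0 n)
  have hγabs : |γ| < 1 := abs_lt.mpr ⟨by linarith, hγ1⟩
  have hf0 : Filter.Tendsto f Filter.atTop (nhds 0) := by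
    apply squeeze_zero_norm hfb
    have := (tendsto_pow_atTop_nhds_zero_of_abs_lt_one hγabs).mul_const (∑ s, |W s|)
    simpa using this
  have htend : Filter.Tendsto (fun n => ∑ i ∈ Finset.range n, g i) Filter.atTop (nhds (f 0)) := by
    simp only [partial_sum]
    have := (tendsto_const_nhds (x := f 0)).sub hf0
    simpa using this
  have hsummable : Summable g := by
    apply Summable.of_norm_bounded (g := fun t => γ ^ t * ∑ s, |δ s|)
    · exact (summable_geometric_of_lt_one hγ0 hγ1).mul_right _
    · intro t
      rw [Real.norm_eq_abs, hg]
      simp only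
      rw [abs_mul, abs_of_nonneg (pow_nonneg hγ0 t)]
      exact mul_le_mul_of_nonneg_left
        (sum_mul_bound _ _ (hdpmf t).1 (hdpmf t).2) (pow_nonneg hγ0 t)
  have hf00 : f 0 = ∑ s, μ s * W s := by
    simp [hf, hd, stateDist]
  rw [← hf00]
  exact hsummable.hasSum_iff_tendsto_nat.mpr htend

lemma visit_sum (γ : ℝ) (hγ0 : 0 ≤ γ) (hγ1 : γ < 1)
    (P : S → A → S → ℝ) (hP : ∀ s a, IsPmf (P s a))
    (π : S → A → ℝ) (hπ : ∀ s, IsPmf (π s))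
    (μ : S → ℝ) (hμ : IsPmf μ) (δ : S → ℝ) :
    ∑ s, visit γ P π μ s * δ s
      = (1 - γ) * ∑' t : ℕ, γ ^ t * ∑ s, stateDist P π μ t s * δ s := by
  have hdpmf := stateDist_pmf P hP π hπ μ hμ
  have hsummable : ∀ s : S, Summable (fun t : ℕ => γ ^ t * stateDist P π μ t s * δ s) := by
    intro s
    apply Summable.of_norm_bounded (g := fun t => γ ^ t * |δ s|)
    · exact (summable_geometric_of_lt_one hγ0 hγ1).mul_right _
    · intro t
      rw [Real.norm_eq_abs, abs_mul, abs_mul, abs_of_nonneg (pow_nonneg hγ0 t)]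
      have hle : stateDist P π μ t s ≤ 1 := by
        rw [← (hdpmf t).2]
        exact Finset.single_le_sum (fun i _ => (hdpmf t).1 i) (Finset.mem_univ s)
      have h0 := (hdpmf t).1 s
      have : |stateDist P π μ t s| ≤ 1 := abs_le.mpr ⟨by linarith, hle⟩
      calc γ ^ t * |stateDist P π μ t s| * |δ s|
          ≤ γ ^ t * 1 * |δ s| := by
            apply mul_le_mul_of_nonneg_right _ (abs_nonneg _)
            exact mul_le_mul_of_nonneg_left this (pow_nonneg hγ0 t)
        _ = γ ^ t * |δ s| := by ring
  calc ∑ s, visit γ P π μ s * δ s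
      = ∑ s, (1 - γ) * ∑' t : ℕ, γ ^ t * stateDist P π μ t s * δ s := by
        apply Finset.sum_congr rfl; intro s _
        rw [visit, mul_assoc]
        congr 1
        rw [← tsum_mul_right]
    _ = (1 - γ) * ∑ s, ∑' t : ℕ, γ ^ t * stateDist P π μ t s * δ s := by
        rw [Finset.mul_sum]
    _ = (1 - γ) * ∑' t : ℕ, ∑ s, γ ^ t * stateDist P π μ t s * δ s := by
        congr 1
        rw [← Summable.tsum_finsetSum (fun s _ => hsummable s)]
    _ = (1 - γ) * ∑' t : ℕ, γ ^ t * ∑ s, stateDist P π μ t s * δ s := by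
        congr 1
        apply tsum_congr; intro t
        rw [Finset.mul_sum]
        apply Finset.sum_congr rfl; intros; ring

end Aux

/-- exact observation-disturbance performance difference: for an
adversary `ν : S → S` and the disturbed policy `π̂_ν(·|s) = π(·|ν(s))` (with
`π(a|ν(s)) > 0`), writing `V` for the value function of `π` and `Vν` for the
value function of `π̂_ν` in `M` (Bellman evaluation equations), and
`J(π) = Σ_s μ(s) V(s)`:
`J_M(π̂_ν) - J_M(π)
  = (γ/(1-γ)) E_{s∼d^{π̂_ν}_M} E_{a∼π(·|ν(s))}[(1 - π(a|s)/π(a|ν(s))) E_{s'∼P(·|s,a)} V(s')]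
  + (1/(1-γ)) E_{s∼d^{π̂_ν}_M} E_{a∼π(·|ν(s))}[(1 - π(a|s)/π(a|ν(s))) R(s,a)]`. -/
theorem observation_disturbance_exact {S A : Type*} [Fintype S] [Fintype A]
    (γ : ℝ) (hγ0 : 0 ≤ γ) (hγ1 : γ < 1)
    (P : S → A → S → ℝ) (hP : ∀ s a, IsPmf (P s a))
    (π : S → A → ℝ) (hπ : ∀ s, IsPmf (π s))
    (ν : S → S) (hposν : ∀ s a, 0 < π (ν s) a)
    (μ : S → ℝ) (hμ : IsPmf μ)
    (R : S → A → ℝ) (V Vν : S → ℝ)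
    (hV : ∀ s, V s = ∑ a, π s a * (R s a + γ * ∑ s', P s a s' * V s'))
    (hVν : ∀ s, Vν s = ∑ a, π (ν s) a * (R s a + γ * ∑ s', P s a s' * Vν s')) :
    (∑ s, μ s * Vν s) - (∑ s, μ s * V s) =
      γ / (1 - γ) * ∑ s, visit γ P (fun s => π (ν s)) μ s *
          ∑ a, π (ν s) a * ((1 - π s a / π (ν s) a) * ∑ s', P s a s' * V s') +
      1 / (1 - γ) * ∑ s, visit γ P (fun s => π (ν s)) μ s *
          ∑ a, π (ν s) a * ((1 - π s a / π (ν s) a) * R s a) := by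
  have h1γ : (1 : ℝ) - γ ≠ 0 := by linarith
  set πh : S → A → ℝ := fun s => π (ν s) with hπh
  have hπhpmf : ∀ s, IsPmf (πh s) := fun s => hπ (ν s)
  set W : S → ℝ := fun s => Vν s - V s with hW
  set δ : S → ℝ := fun s => ∑ a, (πh s a - π s a) * (R s a + γ * ∑ s', P s a s' * V s')
    with hδ
  -- recursion for W
  have hrec : ∀ s, W s = δ s + γ * ∑ a, πh s a * ∑ s', P s a s' * W s' := by
    intro s
    have key : ∀ a, ∑ s', P s a s' * Vν s'
        = (∑ s', P s a s' * V s') + ∑ s', P s a s' * W s' := by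
      intro a
      rw [← Finset.sum_add_distrib]
      apply Finset.sum_congr rfl; intro s' _
      simp only [hW]; ring
    have hWs : W s = (∑ a, πh s a * (R s a + γ * ((∑ s', P s a s' * V s')
        + ∑ s', P s a s' * W s'))) - V s := by
      simp only [hW]
      rw [hVν s]
      congr 1
      apply Finset.sum_congr rfl; intro a _
      rw [key a]
    rw [hWs, hV s]
    have expand : ∀ a, πh s a * (R s a + γ * ((∑ s', P s a s' * V s')
        + ∑ s', P s a s' * W s'))
        = (πh s a - π s a) * (R s a + γ * ∑ s', P s a s' * V s')
          + π s a * (R s a + γ * ∑ s', P s a s' * V s')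
          + γ * (πh s a * ∑ s', P s a s' * W s') := by
      intro a; ring
    rw [Finset.sum_congr rfl fun a _ => expand a]
    rw [Finset.sum_add_distrib, Finset.sum_add_distrib, ← Finset.mul_sum]
    simp only [hδ]
    ring
  have hHS := expected_telescope γ hγ0 hγ1 P hP πh hπhpmf μ hμ W δ hrec
  have hvs := visit_sum γ hγ0 hγ1 P hP πh hπhpmf μ hμ δ
  have hsum : ∑ s, μ s * W s
      = ∑' t : ℕ, γ ^ t * ∑ s, stateDist P πh μ t s * δ s := hHS.tsum_eq.symm
  have hLHS : (∑ s, μ s * Vν s) - (∑ s, μ s * V s) = ∑ s, μ s * W s := by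
    rw [← Finset.sum_sub_distrib]
    apply Finset.sum_congr rfl; intro s _
    simp only [hW]; ring
  have hmain : (∑ s, μ s * Vν s) - (∑ s, μ s * V s)
      = (1 / (1 - γ)) * ∑ s, visit γ P πh μ s * δ s := by
    rw [hLHS, hsum, hvs]
    field_simp
  rw [hmain]
  -- now algebra on the RHS
  have hterm : ∀ s a (Z : ℝ),
      π (ν s) a * ((1 - π s a / π (ν s) a) * Z) = (π (ν s) a - π s a) * Z := by
    intro s a Z
    have hne : π (ν s) a ≠ 0 := (hposν s a).ne'
    field_simp
  have hδeq : ∀ s, δ s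
      = γ * (∑ a, π (ν s) a * ((1 - π s a / π (ν s) a) * ∑ s', P s a s' * V s'))
        + ∑ a, π (ν s) a * ((1 - π s a / π (ν s) a) * R s a) := by
    intro s
    simp only [hδ, hπh]
    rw [Finset.sum_congr rfl fun a _ => hterm s a _,
        Finset.sum_congr rfl fun a _ => hterm s a _, Finset.mul_sum,
        ← Finset.sum_add_distrib]
    apply Finset.sum_congr rfl; intro a _
    ring
  have hXY : ∑ s, visit γ P πh μ s * δ s
      = γ * (∑ s, visit γ P πh μ s *
            ∑ a, π (ν s) a * ((1 - π s a / π (ν s) a) * ∑ s', P s a s' * V s'))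
        + ∑ s, visit γ P πh μ s *
            ∑ a, π (ν s) a * ((1 - π s a / π (ν s) a) * R s a) := by
    rw [Finset.mul_sum, ← Finset.sum_add_distrib]
    apply Finset.sum_congr rfl; intro s _
    rw [hδeq s]; ring
  rw [hXY]
  field_simp
end

section
/- Observation-disturbance robustness bound via VFR: for any stationary policy π in a finite MDP M and any adversary ν : S → S with disturbed policy π̂_ν(·|s) = π(·|ν(s)), |J_M(π) - J_M(π̂_ν)| ≤ (γ/(1-γ)) · max_s D_TV(π(·|s), π(·|ν(s))) · V̂_{M,π} + (2/(1-γ)) · max_s D_TV(π(·|s), π(·|ν(s))) · max_{s,a} |R(s,a)|, where V̂_{M,π} is the Value Function Range of π and D_TV is total variation distance on action distributions. -/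
open Finset

/-- observation-disturbance robustness bound via VFR: for any
adversary `ν : S → S` with disturbed policy `π̂_ν(·|s) = π(·|ν(s))`,
`|J_M(π) - J_M(π̂_ν)| ≤ (γ/(1-γ)) · max_s D_TV(π(·|s), π(·|ν(s))) · V̂_{M,π}
  + (2/(1-γ)) · max_s D_TV(π(·|s), π(·|ν(s))) · max_{s,a} |R(s,a)|`,
where `V` and `Vν` are the value functions of `π` and `π̂_ν` in `M`,
`J = Σ_s μ(s) V(s)`, `V̂_{M,π} = max_s V(s) - min_s V(s)`, and
`D_TV(p,q) = (1/2) Σ_a |p(a) - q(a)|`. -/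
theorem observation_disturbance_bound {S A : Type*} [Fintype S] [Fintype A]
    [Nonempty S] [Nonempty A]
    (γ : ℝ) (hγ0 : 0 ≤ γ) (hγ1 : γ < 1)
    (P : S → A → S → ℝ) (hP : ∀ s a, IsPmf (P s a))
    (π : S → A → ℝ) (hπ : ∀ s, IsPmf (π s))
    (ν : S → S)
    (μ : S → ℝ) (hμ : IsPmf μ)
    (R : S → A → ℝ) (V Vν : S → ℝ)
    (hV : ∀ s, V s = ∑ a, π s a * (R s a + γ * ∑ s', P s a s' * V s'))
    (hVν : ∀ s, Vν s = ∑ a, π (ν s) a * (R s a + γ * ∑ s', P s a s' * Vν s')) :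
    |(∑ s, μ s * V s) - (∑ s, μ s * Vν s)| ≤
      γ / (1 - γ) *
        (univ.sup' univ_nonempty (fun s : S => (1 / 2) * ∑ a, |π s a - π (ν s) a|)) *
        (univ.sup' univ_nonempty V - univ.inf' univ_nonempty V) +
      2 / (1 - γ) *
        (univ.sup' univ_nonempty (fun s : S => (1 / 2) * ∑ a, |π s a - π (ν s) a|)) *
        (univ.sup' univ_nonempty (fun sa : S × A => |R sa.1 sa.2|)) := by
  obtain ⟨s₀, -, hs₀⟩ := Finset.exists_mem_eq_sup' (univ_nonempty (α := S))
    (fun s => |V s - Vν s|)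
  set ε := univ.sup' univ_nonempty (fun s : S => (1 / 2) * ∑ a, |π s a - π (ν s) a|) with hεdef
  set Rmax := univ.sup' univ_nonempty (fun sa : S × A => |R sa.1 sa.2|) with hRdef
  set Vmax := univ.sup' univ_nonempty V with hVmaxdef
  set Vmin := univ.inf' univ_nonempty V with hVmindef
  set D := univ.sup' univ_nonempty (fun s => |V s - Vν s|) with hDdef
  set c := γ * ((Vmax + Vmin) / 2) with hcdef
  have h1γ : 0 < 1 - γ := by linarith
  have hεle : ∀ s : S, (1/2) * ∑ a, |π s a - π (ν s) a| ≤ ε := fun s =>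
    le_sup' (fun s : S => (1/2) * ∑ a, |π s a - π (ν s) a|) (mem_univ s)
  have hRle : ∀ s a, |R s a| ≤ Rmax := fun s a =>
    le_sup' (fun sa : S × A => |R sa.1 sa.2|) (mem_univ (s, a))
  have hVle : ∀ s, V s ≤ Vmax := fun s => le_sup' V (mem_univ s)
  have hVge : ∀ s, Vmin ≤ V s := fun s => inf'_le V (mem_univ s)
  have hDle : ∀ s, |V s - Vν s| ≤ D := fun s =>
    le_sup' (fun s => |V s - Vν s|) (mem_univ s)
  have hRmax0 : 0 ≤ Rmax :=
    le_trans (abs_nonneg _) (hRle (Classical.arbitrary S) (Classical.arbitrary A))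
  have hε0 : 0 ≤ ε := le_trans (by positivity) (hεle (Classical.arbitrary S))
  have hD0 : 0 ≤ D := le_trans (abs_nonneg _) (hDle (Classical.arbitrary S))
  have hVV : Vmin ≤ Vmax := le_trans (hVge (Classical.arbitrary S)) (hVle (Classical.arbitrary S))
  have key : ∀ s, |V s - Vν s| ≤ 2 * ε * Rmax + γ * ε * (Vmax - Vmin) + γ * D := by
    intro s
    have hPV : ∀ a : A, Vmin ≤ ∑ s', P s a s' * V s' ∧ (∑ s', P s a s' * V s') ≤ Vmax := by
      intro a
      obtain ⟨hP0, hP1⟩ := hP s a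
      constructor
      · calc Vmin = ∑ s', P s a s' * Vmin := by rw [← Finset.sum_mul, hP1, one_mul]
          _ ≤ ∑ s', P s a s' * V s' :=
            Finset.sum_le_sum fun s' _ => mul_le_mul_of_nonneg_left (hVge s') (hP0 s')
      · calc (∑ s', P s a s' * V s') ≤ ∑ s', P s a s' * Vmax :=
            Finset.sum_le_sum fun s' _ => mul_le_mul_of_nonneg_left (hVle s') (hP0 s')
          _ = Vmax := by rw [← Finset.sum_mul, hP1, one_mul]
    have hbr : ∀ a : A, |R s a + γ * ∑ s', P s a s' * V s' - c| ≤ Rmax + γ * ((Vmax - Vmin)/2) := by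
      intro a
      obtain ⟨hl, hr⟩ := hPV a
      have h2 : |γ * ∑ s', P s a s' * V s' - c| ≤ γ * ((Vmax - Vmin)/2) := by
        rw [hcdef, ← mul_sub, abs_mul, abs_of_nonneg hγ0]
        refine mul_le_mul_of_nonneg_left ?_ hγ0
        rw [abs_le]
        constructor <;> linarith
      calc |R s a + γ * ∑ s', P s a s' * V s' - c|
          = |R s a + (γ * ∑ s', P s a s' * V s' - c)| := by ring_nf
        _ ≤ |R s a| + |γ * ∑ s', P s a s' * V s' - c| := abs_add_le _ _
        _ ≤ Rmax + γ * ((Vmax - Vmin)/2) := add_le_add (hRle s a) h2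
    have eq1 : V s - Vν s =
        (∑ a, (π s a - π (ν s) a) * (R s a + γ * ∑ s', P s a s' * V s' - c))
        + γ * ∑ a, π (ν s) a * ∑ s', P s a s' * (V s' - Vν s') := by
      have hsum0 : ∑ a, (π s a - π (ν s) a) * c = 0 := by
        rw [← Finset.sum_mul, Finset.sum_sub_distrib, (hπ s).2, (hπ (ν s)).2]
        ring
      have expand : ∀ a : A,
          π s a * (R s a + γ * ∑ s', P s a s' * V s')
            - π (ν s) a * (R s a + γ * ∑ s', P s a s' * Vν s')
          = (π s a - π (ν s) a) * (R s a + γ * ∑ s', P s a s' * V s' - c)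
            + γ * (π (ν s) a * ∑ s', P s a s' * (V s' - Vν s'))
            + (π s a - π (ν s) a) * c := by
        intro a
        have hsplit : ∑ s', P s a s' * (V s' - Vν s')
            = (∑ s', P s a s' * V s') - ∑ s', P s a s' * Vν s' := by
          rw [← Finset.sum_sub_distrib]
          exact Finset.sum_congr rfl fun x _ => mul_sub _ _ _
        rw [hsplit]; ring
      calc V s - Vν s
          = ∑ a, (π s a * (R s a + γ * ∑ s', P s a s' * V s')
              - π (ν s) a * (R s a + γ * ∑ s', P s a s' * Vν s')) := by
            rw [hV s, hVν s, Finset.sum_sub_distrib]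
        _ = ∑ a, ((π s a - π (ν s) a) * (R s a + γ * ∑ s', P s a s' * V s' - c)
              + γ * (π (ν s) a * ∑ s', P s a s' * (V s' - Vν s'))
              + (π s a - π (ν s) a) * c) := Finset.sum_congr rfl fun a _ => expand a
        _ = _ := by
            rw [Finset.sum_add_distrib, Finset.sum_add_distrib, hsum0, add_zero,
              ← Finset.mul_sum]
    have hfirst : |∑ a, (π s a - π (ν s) a) * (R s a + γ * ∑ s', P s a s' * V s' - c)|
        ≤ 2 * ε * Rmax + γ * ε * (Vmax - Vmin) := by
      calc |∑ a, (π s a - π (ν s) a) * (R s a + γ * ∑ s', P s a s' * V s' - c)|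
          ≤ ∑ a, |(π s a - π (ν s) a) * (R s a + γ * ∑ s', P s a s' * V s' - c)| :=
            Finset.abs_sum_le_sum_abs _ _
        _ = ∑ a, |π s a - π (ν s) a| * |R s a + γ * ∑ s', P s a s' * V s' - c| := by
            exact Finset.sum_congr rfl fun a _ => abs_mul _ _
        _ ≤ ∑ a, |π s a - π (ν s) a| * (Rmax + γ * ((Vmax - Vmin)/2)) :=
            Finset.sum_le_sum fun a _ => mul_le_mul_of_nonneg_left (hbr a) (abs_nonneg _)
        _ = (∑ a, |π s a - π (ν s) a|) * (Rmax + γ * ((Vmax - Vmin)/2)) := by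
            rw [Finset.sum_mul]
        _ ≤ (2 * ε) * (Rmax + γ * ((Vmax - Vmin)/2)) := by
            have h := hεle s
            have hb : 0 ≤ Rmax + γ * ((Vmax - Vmin)/2) := by
              have := mul_nonneg hγ0 (by linarith : (0:ℝ) ≤ (Vmax - Vmin)/2)
              linarith
            exact mul_le_mul_of_nonneg_right (by linarith) hb
        _ = 2 * ε * Rmax + γ * ε * (Vmax - Vmin) := by ring
    have hsecond : |∑ a, π (ν s) a * ∑ s', P s a s' * (V s' - Vν s')| ≤ D := by
      obtain ⟨hπ0, hπ1⟩ := hπ (ν s)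
      have hinner : ∀ a : A, |∑ s', P s a s' * (V s' - Vν s')| ≤ D := by
        intro a
        obtain ⟨hP0, hP1⟩ := hP s a
        calc |∑ s', P s a s' * (V s' - Vν s')| ≤ ∑ s', |P s a s' * (V s' - Vν s')| :=
              Finset.abs_sum_le_sum_abs _ _
          _ = ∑ s', P s a s' * |V s' - Vν s'| := Finset.sum_congr rfl fun x _ => by
              rw [abs_mul, abs_of_nonneg (hP0 x)]
          _ ≤ ∑ s', P s a s' * D :=
              Finset.sum_le_sum fun x _ => mul_le_mul_of_nonneg_left (hDle x) (hP0 x)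
          _ = D := by rw [← Finset.sum_mul, hP1, one_mul]
      calc |∑ a, π (ν s) a * ∑ s', P s a s' * (V s' - Vν s')|
          ≤ ∑ a, |π (ν s) a * ∑ s', P s a s' * (V s' - Vν s')| :=
            Finset.abs_sum_le_sum_abs _ _
        _ = ∑ a, π (ν s) a * |∑ s', P s a s' * (V s' - Vν s')| := Finset.sum_congr rfl fun a _ => by
            rw [abs_mul, abs_of_nonneg (hπ0 a)]
        _ ≤ ∑ a, π (ν s) a * D :=
            Finset.sum_le_sum fun a _ => mul_le_mul_of_nonneg_left (hinner a) (hπ0 a)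
        _ = D := by rw [← Finset.sum_mul, hπ1, one_mul]
    calc |V s - Vν s|
        ≤ |∑ a, (π s a - π (ν s) a) * (R s a + γ * ∑ s', P s a s' * V s' - c)|
          + |γ * ∑ a, π (ν s) a * ∑ s', P s a s' * (V s' - Vν s')| := by
          rw [eq1]; exact abs_add_le _ _
      _ ≤ (2 * ε * Rmax + γ * ε * (Vmax - Vmin)) + γ * D := by
          refine add_le_add hfirst ?_
          rw [abs_mul, abs_of_nonneg hγ0]
          exact mul_le_mul_of_nonneg_left hsecond hγ0
      _ = 2 * ε * Rmax + γ * ε * (Vmax - Vmin) + γ * D := by ring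
  have hDkey : D ≤ 2 * ε * Rmax + γ * ε * (Vmax - Vmin) + γ * D := by
    have h := key s₀
    rw [← hs₀] at h
    exact h
  have hDbound : D ≤ γ / (1 - γ) * ε * (Vmax - Vmin) + 2 / (1 - γ) * ε * Rmax := by
    rw [div_mul_eq_mul_div, div_mul_eq_mul_div, div_mul_eq_mul_div, div_mul_eq_mul_div,
      ← add_div, le_div_iff₀ h1γ]
    nlinarith [hDkey]
  calc |(∑ s, μ s * V s) - (∑ s, μ s * Vν s)|
      = |∑ s, μ s * (V s - Vν s)| := by
        rw [← Finset.sum_sub_distrib]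
        congr 1
        exact Finset.sum_congr rfl fun s _ => (mul_sub _ _ _).symm
    _ ≤ ∑ s, |μ s * (V s - Vν s)| := Finset.abs_sum_le_sum_abs _ _
    _ = ∑ s, μ s * |V s - Vν s| := Finset.sum_congr rfl fun s _ => by
        rw [abs_mul, abs_of_nonneg (hμ.1 s)]
    _ ≤ ∑ s, μ s * D := Finset.sum_le_sum fun s _ => mul_le_mul_of_nonneg_left (hDle s) (hμ.1 s)
    _ = D := by rw [← Finset.sum_mul, hμ.2, one_mul]
    _ ≤ _ := hDbound
end

section
/- Tail conditional expectation is minimized over sets of equal measure: let Z be an integrable random variable, q ∈ ℝ, B = {Z ≤ q}, and A any event with P(A) = P(B) > 0. Then E[Z · 1_A] ≥ E[Z · 1_B]; equivalently, E[Z | A] ≥ E[Z | B]. -/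
open MeasureTheory

/-- tail conditional expectation is minimized over sets of equal
measure: for an integrable random variable `Z` on a probability space, `q ∈ ℝ`,
`B = {Z ≤ q}`, and any measurable event `A` with `P(A) = P(B) > 0`, we have
`E[Z · 1_A] ≥ E[Z · 1_B]`. -/
theorem tail_expectation_minimal {Ω : Type*} [MeasurableSpace Ω]
    (μ : Measure Ω) [IsProbabilityMeasure μ]
    (Z : Ω → ℝ) (hZm : Measurable Z) (hZ : Integrable Z μ) (q : ℝ)
    (A : Set Ω) (hA : MeasurableSet A)
    (hAB : μ A = μ {ω | Z ω ≤ q}) (hpos : 0 < μ {ω | Z ω ≤ q}) :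
    ∫ ω in {ω | Z ω ≤ q}, Z ω ∂μ ≤ ∫ ω in A, Z ω ∂μ := by
  set B := {ω | Z ω ≤ q} with hB
  have hBm : MeasurableSet B := hZm measurableSet_Iic
  have hmeas : μ (A \ B) = μ (B \ A) := by
    have h1 : μ (A ∩ B) + μ (A \ B) = μ A := measure_inter_add_diff A hBm
    have h2 : μ (B ∩ A) + μ (B \ A) = μ B := measure_inter_add_diff B hA
    rw [Set.inter_comm] at h2
    have h3 : μ (A ∩ B) + μ (A \ B) = μ (A ∩ B) + μ (B \ A) := by
      rw [h1, h2, hAB]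
    exact (ENNReal.add_right_inj (measure_ne_top μ _)).mp h3
  have hkey : ∫ ω in B \ A, Z ω ∂μ ≤ ∫ ω in A \ B, Z ω ∂μ := by
    have h1 : ∫ ω in B \ A, Z ω ∂μ ≤ ∫ _ω in B \ A, q ∂μ := by
      apply setIntegral_mono_on hZ.integrableOn (integrableOn_const (measure_ne_top μ _))
        (hBm.diff hA)
      intro x hx
      exact hx.1
    have h2 : ∫ _ω in A \ B, q ∂μ ≤ ∫ ω in A \ B, Z ω ∂μ := by
      apply setIntegral_mono_on (integrableOn_const (measure_ne_top μ _))
        hZ.integrableOn (hA.diff hBm)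
      intro x hx
      exact le_of_lt (not_le.mp hx.2)
    calc ∫ ω in B \ A, Z ω ∂μ ≤ ∫ _ω in B \ A, q ∂μ := h1
      _ = ∫ _ω in A \ B, q ∂μ := by rw [setIntegral_const, setIntegral_const, measureReal_def, measureReal_def, hmeas]
      _ ≤ ∫ ω in A \ B, Z ω ∂μ := h2
  have hAeq : ∫ ω in A ∩ B, Z ω ∂μ + ∫ ω in A \ B, Z ω ∂μ = ∫ ω in A, Z ω ∂μ :=
    integral_inter_add_diff hBm hZ.integrableOn
  have hBeq : ∫ ω in A ∩ B, Z ω ∂μ + ∫ ω in B \ A, Z ω ∂μ = ∫ ω in B, Z ω ∂μ := by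
    rw [Set.inter_comm]
    exact integral_inter_add_diff hA hZ.integrableOn
  linarith
end

section
/- CVaR of return lower-bounds CVaR of the initial value: for a finite MDP with random trajectory τ starting from s_0 ∼ μ, let D(τ) be the discounted return and V(s_0) the value of the initial state; assume that the quantile levels match exactly, i.e., P(D(τ) ≤ -VaR_α(-D)) = P(V(s_0) ≤ -VaR_α(-V)) = 1-α. Then -CVaR_α(-D(τ)) ≤ -CVaR_α(-V(s_0)), i.e., the expectation of the return over its worst (1-α)-tail is at most the expectation of the return conditioned on the initial state lying in the worst (1-α)-tail of the value function. -/
open Finset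

noncomputable def pr {Ω : Type*} [Fintype Ω] (p : Ω → ℝ) (E : Set Ω) : ℝ :=
  ∑ ω, E.indicator p ω

noncomputable def VaR {Ω : Type*} [Fintype Ω] (p : Ω → ℝ) (α : ℝ) (Z : Ω → ℝ) : ℝ :=
  sInf {z : ℝ | α ≤ pr p {ω | Z ω ≤ z}}

noncomputable def CVaR {Ω : Type*} [Fintype Ω] (p : Ω → ℝ) (α : ℝ) (Z : Ω → ℝ) : ℝ :=
  (∑ ω, ({ω | VaR p α Z ≤ Z ω} : Set Ω).indicator (fun ω => p ω * Z ω) ω) /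
    pr p {ω | VaR p α Z ≤ Z ω}

/-- CVaR of the return lower-bounds the CVaR of the initial value:
on a finite probability space of trajectories with pmf `p`, return `D`, initial
state `s₀` and value function `V` satisfying `E[D · 1{s₀ = s}] = V(s) · P(s₀ = s)`
(i.e. `V(s) = E[D | s₀ = s]`), if the quantile levels are exact, i.e.
`P(D ≤ -VaR_α(-D)) = 1-α` and `P(V(s₀) ≤ -VaR_α(-V(s₀))) = 1-α`, then
`-CVaR_α(-D) ≤ -CVaR_α(-V(s₀))`. -/
theorem cvar_return_le_cvar_value {Ω S : Type*} [Fintype Ω] [Fintype S]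
    (p : Ω → ℝ) (hp : IsPmf p) (D : Ω → ℝ) (s₀ : Ω → S) (V : S → ℝ)
    (hV : ∀ s : S, (∑ ω, ({ω | s₀ ω = s} : Set Ω).indicator (fun ω => p ω * D ω) ω)
        = V s * pr p {ω | s₀ ω = s})
    (α : ℝ) (hα : α ∈ Set.Ioo (0 : ℝ) 1)
    (hqD : pr p {ω | D ω ≤ -VaR p α (fun ω => -D ω)} = 1 - α)
    (hqV : pr p {ω | V (s₀ ω) ≤ -VaR p α (fun ω => -V (s₀ ω))} = 1 - α) :
    -CVaR p α (fun ω => -D ω) ≤ -CVaR p α (fun ω => -V (s₀ ω)) := by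
  classical
  obtain ⟨hp0, hp1⟩ := hp
  obtain ⟨hα0, hα1⟩ := hα
  have hpos : (0:ℝ) < 1 - α := by linarith
  set a := -VaR p α (fun ω => -D ω) with ha
  set b := -VaR p α (fun ω => -V (s₀ ω)) with hb
  have hprP : ∀ (P : Ω → Prop), pr p {ω | P ω} = ∑ ω, if P ω then p ω else 0 := by
    intro P
    simp [pr, Set.indicator_apply]
  have hqD' : (∑ ω, if D ω ≤ a then p ω else 0) = 1 - α := by
    rw [← hprP]; exact hqD
  have hqV' : (∑ ω, if V (s₀ ω) ≤ b then p ω else 0) = 1 - α := by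
    rw [← hprP]; exact hqV
  -- rewriting CVaR for a negated variable
  have keyCVaR : ∀ (Z : Ω → ℝ) (c : ℝ),
      c = -VaR p α (fun ω => -Z ω) →
      pr p {ω : Ω | Z ω ≤ c} = 1 - α →
      -CVaR p α (fun ω => -Z ω) = (∑ ω, if Z ω ≤ c then p ω * Z ω else 0) / (1 - α) := by
    intro Z c hc hq
    have hset : {ω : Ω | VaR p α (fun ω => -Z ω) ≤ (fun ω => -Z ω) ω} = {ω : Ω | Z ω ≤ c} := by
      ext ω
      simp only [Set.mem_setOf_eq, hc]
      constructor <;> intro h <;> linarith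
    rw [CVaR, hset, hq]
    have hnum : (∑ ω, ({ω : Ω | Z ω ≤ c} : Set Ω).indicator (fun ω => p ω * (fun ω => -Z ω) ω) ω)
        = -∑ ω, if Z ω ≤ c then p ω * Z ω else 0 := by
      rw [← Finset.sum_neg_distrib]
      refine Finset.sum_congr rfl fun ω _ => ?_
      simp only [Set.indicator_apply, Set.mem_setOf_eq]
      split <;> ring
    rw [hnum, neg_div]
    ring
  rw [keyCVaR D a ha hqD, keyCVaR (fun ω => V (s₀ ω)) b hb hqV]
  rw [div_le_div_iff_of_pos_right hpos]
  -- Step 1: E[D 1_A] ≤ E[D 1_B]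
  have step1 : (∑ ω, if D ω ≤ a then p ω * D ω else 0)
      ≤ ∑ ω, if V (s₀ ω) ≤ b then p ω * D ω else 0 := by
    have key : ∑ ω, ((if D ω ≤ a then p ω * D ω else 0) - (if V (s₀ ω) ≤ b then p ω * D ω else 0))
        ≤ ∑ ω, a * ((if D ω ≤ a then p ω else 0) - (if V (s₀ ω) ≤ b then p ω else 0)) := by
      refine Finset.sum_le_sum fun ω _ => ?_
      have hpω := hp0 ω
      by_cases h1 : D ω ≤ a <;> by_cases h2 : V (s₀ ω) ≤ b <;> simp [h1, h2] <;> nlinarith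
    have hrhs : ∑ ω, a * ((if D ω ≤ a then p ω else 0) - (if V (s₀ ω) ≤ b then p ω else 0)) = 0 := by
      rw [← Finset.mul_sum, Finset.sum_sub_distrib, hqD', hqV']
      ring
    rw [Finset.sum_sub_distrib, hrhs] at key
    linarith [key]
  refine le_trans step1 ?_
  -- Step 2: E[D 1_B] = E[V(s₀) 1_B], by conditioning on s₀
  have hgroup : ∀ g : Ω → ℝ, (∑ ω, if V (s₀ ω) ≤ b then g ω else 0)
      = ∑ s, if V s ≤ b then (∑ ω, if s₀ ω = s then g ω else 0) else 0 := by
    intro g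
    have h1 : ∀ ω : Ω, (if V (s₀ ω) ≤ b then g ω else 0)
        = ∑ s, if s₀ ω = s then (if V s ≤ b then g ω else 0) else 0 := by
      intro ω
      rw [Finset.sum_ite_eq]
      simp
    calc (∑ ω, if V (s₀ ω) ≤ b then g ω else 0)
        = ∑ ω, ∑ s, if s₀ ω = s then (if V s ≤ b then g ω else 0) else 0 :=
          Finset.sum_congr rfl fun ω _ => h1 ω
      _ = ∑ s, ∑ ω, if s₀ ω = s then (if V s ≤ b then g ω else 0) else 0 := Finset.sum_comm
      _ = ∑ s, if V s ≤ b then (∑ ω, if s₀ ω = s then g ω else 0) else 0 := by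
          refine Finset.sum_congr rfl fun s _ => ?_
          by_cases hs : V s ≤ b
          · simp [hs]
          · simp [hs]
  have hVs : ∀ s : S, (∑ ω, if s₀ ω = s then p ω * D ω else 0)
      = V s * ∑ ω, if s₀ ω = s then p ω else 0 := by
    intro s
    have := hV s
    rw [hprP (fun ω => s₀ ω = s)] at this
    rw [← this]
    refine Finset.sum_congr rfl fun ω _ => ?_
    simp [Set.indicator_apply]
  have hVs' : ∀ s : S, (∑ ω, if s₀ ω = s then p ω * V (s₀ ω) else 0)
      = V s * ∑ ω, if s₀ ω = s then p ω else 0 := by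
    intro s
    rw [Finset.mul_sum]
    refine Finset.sum_congr rfl fun ω _ => ?_
    by_cases hs : s₀ ω = s
    · simp [hs]; ring
    · simp [hs]
  rw [hgroup (fun ω => p ω * D ω), hgroup (fun ω => p ω * V (s₀ ω))]
  refine le_of_eq (Finset.sum_congr rfl fun s _ => ?_)
  rw [hVs s, hVs' s]
end

section
/- Lower bound on the return of the CVaR-constrained optimum: suppose every trajectory return satisfies D(τ) ≤ M, let π_s be an optimal policy for max_π J(π), and let π_c be an optimal policy for max_π J(π) subject to -CVaR_α(-D(π)) ≥ β, where the constraint set is nonempty. Then J(π_c) ≥ (J(π_s) - αM)/(1-α). -/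
open Finset

lemma cvar_aux {Ω : Type*} [Fintype Ω] (q : Ω → ℝ) (hq : IsPmf q)
    (D : Ω → ℝ) (M : ℝ) (hD : ∀ ω, D ω ≤ M)
    (α : ℝ) (hα : α ∈ Set.Ioo (0 : ℝ) 1)
    (hquant : pr q {ω | D ω ≤ -VaR q α (fun ω => -D ω)} = 1 - α) :
    (∑ ω, q ω * D ω - α * M) / (1 - α) ≤ -CVaR q α (fun ω => -D ω) ∧
      -CVaR q α (fun ω => -D ω) ≤ ∑ ω, q ω * D ω := by
  classical
  obtain ⟨hq0, hq1⟩ := hq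
  obtain ⟨hα0, hα1⟩ := hα
  set v := VaR q α (fun ω => -D ω) with hv
  have h1α : (0:ℝ) < 1 - α := by linarith
  have hset : {ω : Ω | v ≤ -D ω} = {ω : Ω | D ω ≤ -v} := by
    ext ω; simp [le_neg]
  set s : Finset Ω := univ.filter (fun ω => D ω ≤ -v) with hs
  set t : Finset Ω := univ.filter (fun ω => ¬ D ω ≤ -v) with ht
  have hprs : pr q {ω : Ω | D ω ≤ -v} = ∑ ω ∈ s, q ω := by
    rw [pr, Finset.sum_indicator_eq_sum_filter]
    simp [hs]
  have hsq : ∑ ω ∈ s, q ω = 1 - α := by rw [← hprs]; exact hquant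
  have hstq : ∑ ω ∈ s, q ω + ∑ ω ∈ t, q ω = 1 := by
    rw [hs, ht, Finset.sum_filter_add_sum_filter_not]; exact hq1
  have htq : ∑ ω ∈ t, q ω = α := by linarith
  set S : ℝ := ∑ ω ∈ s, q ω * D ω with hS
  set T : ℝ := ∑ ω ∈ t, q ω * D ω with hT
  have hJ' : ∑ ω, q ω * D ω = S + T := by
    rw [hS, hT, hs, ht, Finset.sum_filter_add_sum_filter_not]
  have hcvar : -CVaR q α (fun ω => -D ω) = S / (1 - α) := by
    rw [CVaR]
    have hnum : (∑ ω, ({ω : Ω | VaR q α (fun ω => -D ω) ≤ -D ω} : Set Ω).indicator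
        (fun ω => q ω * (-D ω)) ω) = -S := by
      rw [← hv, hset, Finset.sum_indicator_eq_sum_filter, hS, ← Finset.sum_neg_distrib]
      refine Finset.sum_congr (by simp [hs]) (fun ω _ => by ring)
    have hden : pr q {ω : Ω | VaR q α (fun ω => -D ω) ≤ -D ω} = 1 - α := by
      rw [← hv, hset, hprs, hsq]
    rw [hnum, hden, neg_div, neg_neg]
  -- bounds
  have hT_le : T ≤ α * M := by
    have : T ≤ ∑ ω ∈ t, q ω * M :=
      Finset.sum_le_sum fun ω _ => mul_le_mul_of_nonneg_left (hD ω) (hq0 ω)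
    calc T ≤ ∑ ω ∈ t, q ω * M := this
    _ = (∑ ω ∈ t, q ω) * M := by rw [Finset.sum_mul]
    _ = α * M := by rw [htq]
  have hS_le : S ≤ (1 - α) * (-v) := by
    have : S ≤ ∑ ω ∈ s, q ω * (-v) := by
      refine Finset.sum_le_sum fun ω hω => ?_
      have hmem : D ω ≤ -v := by
        rw [hs] at hω; exact (Finset.mem_filter.mp hω).2
      exact mul_le_mul_of_nonneg_left hmem (hq0 ω)
    calc S ≤ ∑ ω ∈ s, q ω * (-v) := this
    _ = (∑ ω ∈ s, q ω) * (-v) := by rw [Finset.sum_mul]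
    _ = (1 - α) * (-v) := by rw [hsq]
  have hT_ge : α * (-v) ≤ T := by
    have : ∑ ω ∈ t, q ω * (-v) ≤ T := by
      refine Finset.sum_le_sum fun ω hω => ?_
      have hmem : ¬ D ω ≤ -v := by
        rw [ht] at hω; exact (Finset.mem_filter.mp hω).2
      exact mul_le_mul_of_nonneg_left (le_of_not_ge hmem) (hq0 ω)
    calc α * (-v) = (∑ ω ∈ t, q ω) * (-v) := by rw [htq]
    _ = ∑ ω ∈ t, q ω * (-v) := by rw [Finset.sum_mul]
    _ ≤ T := this
  constructor
  · rw [hcvar, hJ']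
    gcongr
    linarith
  · rw [hcvar, hJ', div_le_iff₀ h1α]
    nlinarith [mul_le_mul_of_nonneg_left hS_le hα0.le,
      mul_le_mul_of_nonneg_left hT_ge h1α.le]

/-- lower bound on the return of the CVaR-constrained optimum:
with every trajectory return bounded by `M`, `πs` optimal for `max_π J(π)` and
`πc` optimal for `max_π J(π)` subject to `-CVaR_α(-D(π)) ≥ β` (a constraint that
`πc` itself satisfies), under the exact-quantile assumption for `πs` and `πc`,
`J(πc) ≥ (J(πs) - αM)/(1-α)`.  Here each policy `π` induces a pmf `p π` on the
finite trajectory space `Ω`, `D` is the trajectory return and `J(π) = E_{p π}[D]`. -/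
theorem cvar_constrained_return_lower_bound {Pol : Type*} {Ω : Type*} [Fintype Ω]
    (p : Pol → Ω → ℝ) (hp : ∀ π, IsPmf (p π))
    (D : Ω → ℝ) (M : ℝ) (hD : ∀ ω, D ω ≤ M)
    (α β : ℝ) (hα : α ∈ Set.Ioo (0 : ℝ) 1)
    (J : Pol → ℝ) (hJ : ∀ π, J π = ∑ ω, p π ω * D ω)
    (πs πc : Pol)
    (hπs : ∀ π, J π ≤ J πs)
    (hπc_feas : β ≤ -CVaR (p πc) α (fun ω => -D ω))
    (hπc : ∀ π, β ≤ -CVaR (p π) α (fun ω => -D ω) → J π ≤ J πc)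
    (hqs : pr (p πs) {ω | D ω ≤ -VaR (p πs) α (fun ω => -D ω)} = 1 - α)
    (hqc : pr (p πc) {ω | D ω ≤ -VaR (p πc) α (fun ω => -D ω)} = 1 - α) :
    (J πs - α * M) / (1 - α) ≤ J πc := by
  obtain ⟨hs1, hs2⟩ := cvar_aux (p πs) (hp πs) D M hD α hα hqs
  obtain ⟨-, hc2⟩ := cvar_aux (p πc) (hp πc) D M hD α hα hqc
  rw [← hJ πs] at hs1 hs2
  rw [← hJ πc] at hc2
  by_cases hfeas : β ≤ -CVaR (p πs) α (fun ω => -D ω)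
  · have := hπc πs hfeas
    linarith
  · push_neg at hfeas
    linarith
end

section
/- Performance difference in expectation form via visitation measure: for a finite MDP, any two transition kernels P, P̂ and stationary policy π, (1-γ)(J_{M̂}(π) - J_M(π)) = γ Σ_s d^π_{M̂}(s) Σ_a π(a|s) Σ_{s'} (P̂(s'|s,a) - P(s'|s,a)) V_{M,π}(s'), where J denotes expected discounted return from a common initial distribution μ. -/
open Finset

section Aux

variable {S A : Type*} [Fintype S] [Fintype A]

lemma stateDist_nonneg (P : S → A → S → ℝ) (π : S → A → ℝ) (μ : S → ℝ)
    (hP : ∀ s a, IsPmf (P s a)) (hπ : ∀ s, IsPmf (π s)) (hμ : IsPmf μ) :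
    ∀ t s, 0 ≤ stateDist P π μ t s := by
  intro t
  induction t with
  | zero => exact hμ.1
  | succ t ih =>
    intro s
    apply Finset.sum_nonneg; intro s' _
    apply Finset.sum_nonneg; intro a _
    exact mul_nonneg (mul_nonneg (ih s') ((hπ s').1 a)) ((hP s' a).1 s)

lemma stateDist_sum_one (P : S → A → S → ℝ) (π : S → A → ℝ) (μ : S → ℝ)
    (hP : ∀ s a, IsPmf (P s a)) (hπ : ∀ s, IsPmf (π s)) (hμ : IsPmf μ) :
    ∀ t, ∑ s, stateDist P π μ t s = 1 := by
  intro t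
  induction t with
  | zero => exact hμ.2
  | succ t ih =>
    show ∑ s, ∑ s', ∑ a, stateDist P π μ t s' * π s' a * P s' a s = 1
    rw [Finset.sum_comm]
    have hkey : ∀ s', ∑ s, ∑ a, stateDist P π μ t s' * π s' a * P s' a s
        = stateDist P π μ t s' := by
      intro s'
      rw [Finset.sum_comm]
      have h1 : ∀ a, ∑ s, stateDist P π μ t s' * π s' a * P s' a s
          = stateDist P π μ t s' * π s' a := by
        intro a
        rw [← Finset.mul_sum, (hP s' a).2, mul_one]
      rw [Finset.sum_congr rfl (fun a _ => h1 a), ← Finset.mul_sum, (hπ s').2, mul_one]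
    rw [Finset.sum_congr rfl (fun s' _ => hkey s'), ih]

lemma stateDist_step (P : S → A → S → ℝ) (π : S → A → ℝ) (μ : S → ℝ) (t : ℕ) (f : S → ℝ) :
    ∑ s, stateDist P π μ (t + 1) s * f s
      = ∑ s, stateDist P π μ t s * ∑ a, π s a * ∑ s', P s a s' * f s' := by
  show ∑ s, (∑ s', ∑ a, stateDist P π μ t s' * π s' a * P s' a s) * f s = _
  simp only [Finset.sum_mul, Finset.mul_sum]
  rw [Finset.sum_comm]
  refine Finset.sum_congr rfl fun s' _ => ?_
  rw [Finset.sum_comm]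
  refine Finset.sum_congr rfl fun a _ => Finset.sum_congr rfl fun s _ => ?_
  ring

end Aux

/-- performance difference in expectation form via the visitation
measure: for two transition kernels `P`, `P̂` and a stationary policy `π`,
`(1-γ)(J_{M̂}(π) - J_M(π)) = γ Σ_s d^π_{M̂}(s) Σ_a π(a|s) Σ_{s'}
(P̂(s'|s,a) - P(s'|s,a)) V_{M,π}(s')`, where `V` and `V̂` solve the Bellman
evaluation equations for kernels `P` and `P̂` and `J = Σ_s μ(s) V(s)`. -/
theorem performance_difference_visitation {S A : Type*} [Fintype S] [Fintype A]
    (γ : ℝ) (hγ0 : 0 ≤ γ) (hγ1 : γ < 1)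
    (P Phat : S → A → S → ℝ) (hP : ∀ s a, IsPmf (P s a)) (hPhat : ∀ s a, IsPmf (Phat s a))
    (π : S → A → ℝ) (hπ : ∀ s, IsPmf (π s))
    (μ : S → ℝ) (hμ : IsPmf μ)
    (R : S → A → ℝ) (V Vhat : S → ℝ)
    (hV : ∀ s, V s = ∑ a, π s a * (R s a + γ * ∑ s', P s a s' * V s'))
    (hVhat : ∀ s, Vhat s = ∑ a, π s a * (R s a + γ * ∑ s', Phat s a s' * Vhat s')) :
    (1 - γ) * ((∑ s, μ s * Vhat s) - (∑ s, μ s * V s)) =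
      γ * ∑ s, visit γ Phat π μ s *
        ∑ a, π s a * ∑ s', (Phat s a s' - P s a s') * V s' := by
  classical
  set D : S → ℝ := fun s => Vhat s - V s with hDdef
  set g : S → ℝ := fun s => γ * ∑ a, π s a * ∑ s', (Phat s a s' - P s a s') * V s' with hgdef
  have hdnn := stateDist_nonneg Phat π μ hPhat hπ hμ
  have hdsum := stateDist_sum_one Phat π μ hPhat hπ hμ
  have hdle1 : ∀ t s, stateDist Phat π μ t s ≤ 1 := by
    intro t s
    calc stateDist Phat π μ t s ≤ ∑ s', stateDist Phat π μ t s' :=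
          Finset.single_le_sum (fun s' _ => hdnn t s') (Finset.mem_univ s)
      _ = 1 := hdsum t
  -- the fundamental pointwise identity
  have hD : ∀ s, D s = g s + γ * ∑ a, π s a * ∑ s', Phat s a s' * D s' := by
    intro s
    have key : ∀ a, ∑ s', (Phat s a s' - P s a s') * V s' + ∑ s', Phat s a s' * D s'
        = (∑ s', Phat s a s' * Vhat s') - ∑ s', P s a s' * V s' := by
      intro a
      rw [← Finset.sum_add_distrib, ← Finset.sum_sub_distrib]
      refine Finset.sum_congr rfl fun s' _ => ?_
      simp only [hDdef]
      ring
    have h1 : D s = ∑ a, (π s a * (R s a + γ * ∑ s', Phat s a s' * Vhat s')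
        - π s a * (R s a + γ * ∑ s', P s a s' * V s')) := by
      rw [Finset.sum_sub_distrib, ← hV s, ← hVhat s]
    rw [h1]
    show _ = γ * ∑ a, π s a * ∑ s', (Phat s a s' - P s a s') * V s'
        + γ * ∑ a, π s a * ∑ s', Phat s a s' * D s'
    rw [Finset.mul_sum, Finset.mul_sum, ← Finset.sum_add_distrib]
    refine Finset.sum_congr rfl fun a _ => ?_
    linear_combination (-(γ * π s a)) * key a
  set W : ℕ → ℝ := fun t => ∑ s, stateDist Phat π μ t s * D s with hWdef
  set G : ℕ → ℝ := fun t => ∑ s, stateDist Phat π μ t s * g s with hGdef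
  have hWrec : ∀ t, W t = G t + γ * W (t + 1) := by
    intro t
    simp only [hWdef, hGdef]
    calc ∑ s, stateDist Phat π μ t s * D s
        = ∑ s, (stateDist Phat π μ t s * g s
            + γ * (stateDist Phat π μ t s * ∑ a, π s a * ∑ s', Phat s a s' * D s')) := by
          refine Finset.sum_congr rfl fun s _ => ?_
          rw [hD s]; ring
      _ = (∑ s, stateDist Phat π μ t s * g s)
            + γ * ∑ s, stateDist Phat π μ t s * ∑ a, π s a * ∑ s', Phat s a s' * D s' := by
          rw [Finset.sum_add_distrib, Finset.mul_sum]
      _ = (∑ s, stateDist Phat π μ t s * g s)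
            + γ * ∑ s, stateDist Phat π μ (t + 1) s * D s := by
          rw [← stateDist_step Phat π μ t D]
  have htel : ∀ n, W 0 = (∑ t ∈ Finset.range n, γ ^ t * G t) + γ ^ n * W n := by
    intro n
    induction n with
    | zero => simp
    | succ n ih =>
      rw [ih, hWrec n, Finset.sum_range_succ]
      ring
  -- bounds
  set C : ℝ := ∑ s, |D s| with hCdef
  set Cg : ℝ := ∑ s, |g s| with hCgdef
  have habs : ∀ (f : S → ℝ) (t : ℕ),
      |∑ s, stateDist Phat π μ t s * f s| ≤ ∑ s, |f s| := by
    intro f t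
    calc |∑ s, stateDist Phat π μ t s * f s| ≤ ∑ s, |stateDist Phat π μ t s * f s| :=
          Finset.abs_sum_le_sum_abs _ _
      _ ≤ ∑ s, |f s| := by
          refine Finset.sum_le_sum fun s _ => ?_
          rw [abs_mul, abs_of_nonneg (hdnn t s)]
          calc stateDist Phat π μ t s * |f s| ≤ 1 * |f s| :=
                mul_le_mul_of_nonneg_right (hdle1 t s) (abs_nonneg _)
            _ = |f s| := one_mul _
  have hWbd : ∀ t, |W t| ≤ C := fun t => habs D t
  have hGbd : ∀ t, |G t| ≤ Cg := fun t => habs g t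
  have hgeo : Summable (fun t : ℕ => γ ^ t) := summable_geometric_of_lt_one hγ0 hγ1
  have hsumG : Summable (fun t : ℕ => γ ^ t * G t) := by
    apply Summable.of_norm_bounded (g := fun t : ℕ => Cg * γ ^ t) (hgeo.mul_left Cg)
    intro t
    rw [Real.norm_eq_abs, abs_mul, abs_pow, abs_of_nonneg hγ0]
    calc γ ^ t * |G t| ≤ γ ^ t * Cg :=
          mul_le_mul_of_nonneg_left (hGbd t) (pow_nonneg hγ0 t)
      _ = Cg * γ ^ t := mul_comm _ _
  -- the limit identity
  have h1 : Filter.Tendsto (fun n => γ ^ n * W n) Filter.atTop (nhds 0) := by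
    refine squeeze_zero_norm (a := fun n => C * γ ^ n) (fun n => ?_) ?_
    · 
      rw [Real.norm_eq_abs, abs_mul, abs_pow, abs_of_nonneg hγ0]
      calc γ ^ n * |W n| ≤ γ ^ n * C :=
            mul_le_mul_of_nonneg_left (hWbd n) (pow_nonneg hγ0 n)
        _ = C * γ ^ n := mul_comm _ _
    · have := (tendsto_pow_atTop_nhds_zero_of_lt_one hγ0 hγ1).const_mul C
      simpa using this
  have hlim : Filter.Tendsto (fun n => ∑ t ∈ Finset.range n, γ ^ t * G t)
      Filter.atTop (nhds (W 0)) := by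
    have h2 : Filter.Tendsto (fun n => W 0 - γ ^ n * W n) Filter.atTop (nhds (W 0 - 0)) :=
      Filter.Tendsto.sub tendsto_const_nhds h1
    rw [sub_zero] at h2
    refine h2.congr fun n => ?_
    have := htel n
    linarith
  have htsum : ∑' t : ℕ, γ ^ t * G t = W 0 :=
    tendsto_nhds_unique hsumG.hasSum.tendsto_sum_nat hlim
  -- summability in s
  have hsum_s : ∀ s, Summable (fun t : ℕ => γ ^ t * stateDist Phat π μ t s * g s) := by
    intro s
    apply Summable.mul_right
    apply Summable.of_nonneg_of_le
        (fun t => mul_nonneg (pow_nonneg hγ0 t) (hdnn t s)) (fun t => ?_) hgeo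
    calc γ ^ t * stateDist Phat π μ t s ≤ γ ^ t * 1 :=
          mul_le_mul_of_nonneg_left (hdle1 t s) (pow_nonneg hγ0 t)
      _ = γ ^ t := mul_one _
  -- rewrite the RHS
  have hrhs : γ * ∑ s, visit γ Phat π μ s *
      ∑ a, π s a * ∑ s', (Phat s a s' - P s a s') * V s'
      = (1 - γ) * ∑' t : ℕ, γ ^ t * G t := by
    rw [Finset.mul_sum]
    calc ∑ s, γ * (visit γ Phat π μ s * ∑ a, π s a * ∑ s', (Phat s a s' - P s a s') * V s')
        = ∑ s, (1 - γ) * ∑' t : ℕ, γ ^ t * stateDist Phat π μ t s * g s := by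
          refine Finset.sum_congr rfl fun s _ => ?_
          simp only [visit, hgdef]
          rw [tsum_mul_right]
          ring
      _ = (1 - γ) * ∑ s, ∑' t : ℕ, γ ^ t * stateDist Phat π μ t s * g s := by
          rw [Finset.mul_sum]
      _ = (1 - γ) * ∑' t : ℕ, ∑ s, γ ^ t * stateDist Phat π μ t s * g s := by
          rw [← Summable.tsum_finsetSum (fun s _ => hsum_s s)]
      _ = (1 - γ) * ∑' t : ℕ, γ ^ t * G t := by
          congr 1
          refine tsum_congr fun t => ?_
          simp only [hGdef, Finset.mul_sum]
          refine Finset.sum_congr rfl fun s _ => ?_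
          ring
  rw [hrhs, htsum]
  congr 1
  simp only [hWdef]
  show (∑ s, μ s * Vhat s) - (∑ s, μ s * V s) = ∑ s, μ s * D s
  rw [← Finset.sum_sub_distrib]
  refine Finset.sum_congr rfl fun s _ => ?_
  simp only [hDdef]
  ring
end
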